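/- arXiv:2306.16263 — 4 statements merged into one kernel-verified Lean document; each statement's English description precedes it below -/
import Mathlib

section
/- For every real m > 1 there exists a constant C(m) > 0 such that for all integers j ≥ 1 and k ≥ 1, (2/(j+k−1)) Σ_{i=1}^{j+k−1} i^m ≤ (2/(m+1)) (j^m + k^m) + C(m) (j^{m−1} k + j k^{m−1}). Consequently, the uniform daughter distribution B_{j,k}^i = 2/(j+k−1) for 1 ≤ i ≤ j+k−1 satisfies Σ_{i=1}^{j+k−1} i^m B_{j,k}^i ≤ (1−ε_m)(j^m + k^m) + κ_m (j k^{m−1} + j^{m−1} k) with ε_m = (m−1)/(m+1) ∈ (0,1) and some κ_m ≥ 1. -/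
/-!
Comparing the sum with `∫₀ⁿ x ^ m` gives `∑_{i<n} i ^ m ≤ n ^ (m+1) / (m+1)`, and for `n = j + k ≥ 2`
one has `n ^ (m+1) / (n-1) ≤ n ^ m + 2 n ^ (m-1)`. It remains to bound `(j+k) ^ m + 2 (j+k) ^ (m-1)`
by `j ^ m + k ^ m` plus cross terms. If `k ≤ j`, the tangent to `x ↦ x ^ m` at `j + k` gives
`(j+k) ^ m ≤ j ^ m + m (j+k) ^ (m-1) k`, and `(j+k) ^ (m-1) ≤ 2 ^ (m-1) j ^ (m-1)`.
-/

open Real Finset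

lemma sum_range_rpow_le {m : ℝ} (hm : 0 ≤ m) (n : ℕ) :
    ∑ i ∈ range n, (i : ℝ) ^ m ≤ (n : ℝ) ^ (m + 1) / (m + 1) := by
  have hmono : MonotoneOn (fun x : ℝ => x ^ m) (Set.Icc ((0 : ℕ) : ℝ) n) :=
    (monotoneOn_rpow_Ici_of_exponent_nonneg hm).mono fun x hx => by simpa using hx.1
  calc ∑ i ∈ range n, (i : ℝ) ^ m
      ≤ ∫ x in (0 : ℝ)..n, x ^ m := by
        rw [range_eq_Ico]
        exact_mod_cast MonotoneOn.sum_le_integral_Ico (Nat.zero_le n) hmono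
    _ = (n : ℝ) ^ (m + 1) / (m + 1) := by
        rw [integral_rpow (Or.inl (by linarith))]
        simp [zero_rpow (by linarith : m + 1 ≠ 0)]

lemma rpow_add_mul_rpow_sub_one_mul_sub_le {p x t : ℝ} (hp : 1 ≤ p) (hx : 0 < x) (ht : 0 ≤ t) :
    x ^ p + p * x ^ (p - 1) * (t - x) ≤ t ^ p := by
  have hbern := one_add_mul_self_le_rpow_one_add
    (by linarith [div_nonneg ht hx.le] : -1 ≤ t / x - 1) hp
  rw [add_sub_cancel, div_rpow ht hx.le] at hbern
  have hxp : 0 < x ^ p := rpow_pos_of_pos hx p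
  calc x ^ p + p * x ^ (p - 1) * (t - x) = x ^ p * (1 + p * (t / x - 1)) := by
        rw [rpow_sub_one hx.ne']; field_simp
    _ ≤ x ^ p * (t ^ p / x ^ p) := by gcongr
    _ = t ^ p := mul_div_cancel₀ _ hxp.ne'

lemma rpow_add_one_div_sub_one_le {n : ℝ} (m : ℝ) (hn : 2 ≤ n) :
    n ^ (m + 1) / (n - 1) ≤ n ^ m + 2 * n ^ (m - 1) := by
  have hn0 : n ≠ 0 := by positivity
  rw [div_le_iff₀ (by linarith), rpow_add_one hn0, rpow_sub_one hn0]
  have : 0 < n ^ m := by positivity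
  rw [← sub_nonneg]
  have key : (n ^ m + 2 * (n ^ m / n)) * (n - 1) - n ^ m * n = n ^ m * (n - 2) / n := by
    field_simp; ring
  rw [key]
  exact div_nonneg (mul_nonneg this.le (by linarith)) (by linarith)

lemma add_rpow_add_two_mul_le_of_le {m a b : ℝ} (hm : 1 ≤ m) (hb : 1 ≤ b) (hba : b ≤ a) :
    (a + b) ^ m + 2 * (a + b) ^ (m - 1) ≤ a ^ m + (m + 2) * 2 ^ (m - 1) * (a ^ (m - 1) * b) := by
  have hab : 0 < a + b := by linarith
  have hpow : (a + b) ^ (m - 1) ≤ 2 ^ (m - 1) * a ^ (m - 1) := by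
    rw [← mul_rpow zero_le_two (by linarith)]
    exact rpow_le_rpow hab.le (by linarith) (by linarith)
  have htangent := rpow_add_mul_rpow_sub_one_mul_sub_le hm hab (t := a) (by linarith)
  calc (a + b) ^ m + 2 * (a + b) ^ (m - 1)
      ≤ a ^ m + (m + 2) * (a + b) ^ (m - 1) * b := by
        have : 0 ≤ (a + b) ^ (m - 1) := by positivity
        nlinarith
    _ ≤ a ^ m + (m + 2) * (2 ^ (m - 1) * a ^ (m - 1)) * b := by gcongr
    _ = a ^ m + (m + 2) * 2 ^ (m - 1) * (a ^ (m - 1) * b) := by ring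

lemma add_rpow_add_two_mul_le {m a b : ℝ} (hm : 1 ≤ m) (ha : 1 ≤ a) (hb : 1 ≤ b) :
    (a + b) ^ m + 2 * (a + b) ^ (m - 1) ≤
      a ^ m + b ^ m + (m + 2) * 2 ^ (m - 1) * (a ^ (m - 1) * b + a * b ^ (m - 1)) := by
  have hK : 0 ≤ (m + 2) * 2 ^ (m - 1) := by positivity
  have : 0 ≤ a ^ m := by positivity
  have : 0 ≤ b ^ m := by positivity
  have : 0 ≤ a ^ (m - 1) * b := by positivity
  have : 0 ≤ a * b ^ (m - 1) := by positivity
  rcases le_total b a with hba | hab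
  · nlinarith [add_rpow_add_two_mul_le_of_le hm hb hba]
  · nlinarith [add_comm a b ▸ add_rpow_add_two_mul_le_of_le hm ha hab]

lemma uniform_daughter_moment_le {m : ℝ} (hm : 1 ≤ m) {j k : ℕ} (hj : 1 ≤ j) (hk : 1 ≤ k) :
    (2 / ((j : ℝ) + k - 1)) * ∑ i ∈ Ico 1 (j + k), (i : ℝ) ^ m ≤
      (2 / (m + 1)) * ((j : ℝ) ^ m + (k : ℝ) ^ m) +
        (2 / (m + 1) * ((m + 2) * 2 ^ (m - 1))) *
          ((j : ℝ) ^ (m - 1) * k + j * (k : ℝ) ^ (m - 1)) := by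
  have ha : (1 : ℝ) ≤ j := by exact_mod_cast hj
  have hb : (1 : ℝ) ≤ k := by exact_mod_cast hk
  have hsum : ∑ i ∈ Ico 1 (j + k), (i : ℝ) ^ m ≤ ((j : ℝ) + k) ^ (m + 1) / (m + 1) := by
    calc ∑ i ∈ Ico 1 (j + k), (i : ℝ) ^ m ≤ ∑ i ∈ range (j + k), (i : ℝ) ^ m :=
          sum_le_sum_of_subset_of_nonneg (range_eq_Ico (j + k) ▸ Ico_subset_Ico_left (Nat.zero_le 1))
            fun _ _ _ => by positivity
      _ ≤ _ := by exact_mod_cast sum_range_rpow_le (by linarith) (j + k)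
  have hn : 0 < (j : ℝ) + k - 1 := by linarith
  calc (2 / ((j : ℝ) + k - 1)) * ∑ i ∈ Ico 1 (j + k), (i : ℝ) ^ m
      ≤ (2 / ((j : ℝ) + k - 1)) * (((j : ℝ) + k) ^ (m + 1) / (m + 1)) := by gcongr
    _ = 2 / (m + 1) * (((j : ℝ) + k) ^ (m + 1) / ((j : ℝ) + k - 1)) := by
        field_simp
    _ ≤ 2 / (m + 1) * (((j : ℝ) + k) ^ m + 2 * ((j : ℝ) + k) ^ (m - 1)) := by
        gcongr; exact rpow_add_one_div_sub_one_le m (by linarith)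
    _ ≤ 2 / (m + 1) * ((j : ℝ) ^ m + (k : ℝ) ^ m + (m + 2) * 2 ^ (m - 1) *
          ((j : ℝ) ^ (m - 1) * k + j * (k : ℝ) ^ (m - 1))) := by
        exact mul_le_mul_of_nonneg_left (add_rpow_add_two_mul_le hm ha hb) (by positivity)
    _ = _ := by ring

/-- Example 1.1: the uniform daughter distribution satisfies the moment-damping condition. -/
theorem stmt5 (m : ℝ) (hm : 1 < m) :
    ∃ C : ℝ, 0 < C ∧
      (∀ j k : ℕ, 1 ≤ j → 1 ≤ k →
        (2 / ((j : ℝ) + (k : ℝ) - 1)) * ∑ i ∈ Finset.Ico 1 (j + k), (i : ℝ) ^ m ≤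
          (2 / (m + 1)) * ((j : ℝ) ^ m + (k : ℝ) ^ m) +
            C * ((j : ℝ) ^ (m - 1) * (k : ℝ) + (j : ℝ) * (k : ℝ) ^ (m - 1))) ∧
      (0 < (m - 1) / (m + 1) ∧ (m - 1) / (m + 1) < 1) ∧
      (∃ κ : ℝ, 1 ≤ κ ∧ ∀ j k : ℕ, 1 ≤ j → 1 ≤ k →
        ∑ i ∈ Finset.Ico 1 (j + k), (i : ℝ) ^ m * (2 / ((j : ℝ) + (k : ℝ) - 1)) ≤
          (1 - (m - 1) / (m + 1)) * ((j : ℝ) ^ m + (k : ℝ) ^ m) +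
            κ * ((j : ℝ) * (k : ℝ) ^ (m - 1) + (j : ℝ) ^ (m - 1) * (k : ℝ))) := by
  set C : ℝ := 2 / (m + 1) * ((m + 2) * 2 ^ (m - 1))
  have hm1 : 0 < m + 1 := by linarith
  have hbound := fun j k (hj : 1 ≤ j) (hk : 1 ≤ k) => uniform_daughter_moment_le hm.le hj hk
  refine ⟨C, by positivity, hbound, ⟨div_pos (by linarith) hm1, (div_lt_one hm1).2 (by linarith)⟩,
    max C 1, le_max_right _ _, fun j k hj hk => ?_⟩
  have hε : 1 - (m - 1) / (m + 1) = 2 / (m + 1) := by field_simp; ring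
  calc ∑ i ∈ Ico 1 (j + k), (i : ℝ) ^ m * (2 / ((j : ℝ) + k - 1))
      = (2 / ((j : ℝ) + k - 1)) * ∑ i ∈ Ico 1 (j + k), (i : ℝ) ^ m := by
        rw [← sum_mul, mul_comm]
    _ ≤ 2 / (m + 1) * ((j : ℝ) ^ m + (k : ℝ) ^ m) +
          C * ((j : ℝ) * (k : ℝ) ^ (m - 1) + (j : ℝ) ^ (m - 1) * k) := by
        rw [add_comm ((j : ℝ) * _)]; exact hbound j k hj hk
    _ ≤ _ := by rw [hε]; gcongr; exact le_max_left _ _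
end

section
/- Let G : [0,∞) → [0,∞) be a nonnegative convex function of class C¹ with G(0) = 0 and G'(0) ≥ 0 whose derivative G' is concave on [0,∞). Then for all integers i ≥ 1 and j ≥ 1, (i+j)(G(i+j) − G(i) − G(j)) ≤ 2 (i G(j) + j G(i)). -/
/-!
Write `D = G(a+b) - G(a) - G(b)`. Concavity of `g = G'` together with `g 0 ≥ 0` makes `g`
subadditive, and comparing derivatives in `b` gives `D ≤ b g(a)`; symmetrically `D ≤ a g(b)`.
It also gives `x g(t) ≥ t g(x)` on `[0, x]`, so `t ↦ 2x G(t) - t² g(x)` is nondecreasing there,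
whence `x g(x) ≤ 2 G(x)`.
Hence `(a+b) D = a D + b D ≤ b (a g a) + a (b g b) ≤ 2 (b G a + a G b)`.
-/

open Set

lemma le_of_hasDerivAt_nonneg {f f' : ℝ → ℝ} {a b : ℝ} (hab : a ≤ b)
    (hf : ContinuousOn f (Icc a b)) (hf' : ∀ x ∈ Ioo a b, HasDerivAt f (f' x) x)
    (hf'₀ : ∀ x ∈ Ioo a b, 0 ≤ f' x) : f a ≤ f b := by
  have hint : interior (Icc a b) = Ioo a b := interior_Icc
  exact monotoneOn_of_hasDerivWithinAt_nonneg (convex_Icc a b) hf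
    (fun x hx ↦ (hf' x (hint ▸ hx)).hasDerivWithinAt) (fun x hx ↦ hf'₀ x (hint ▸ hx))
    (left_mem_Icc.2 hab) (right_mem_Icc.2 hab) hab

namespace ConcaveOn

variable {g : ℝ → ℝ} (hg : ConcaveOn ℝ (Ici 0) g) (hg₀ : 0 ≤ g 0)
include hg hg₀

lemma mul_map_le_mul_map_of_le {t x : ℝ} (ht : 0 ≤ t) (htx : t ≤ x) :
    t * g x ≤ x * g t := by
  rcases (ht.trans htx).eq_or_lt with rfl | hx
  · obtain rfl : t = 0 := le_antisymm htx ht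
    simp
  have hchord := hg.2 (mem_Ici.2 le_rfl) (mem_Ici.2 hx.le)
    (div_nonneg (sub_nonneg.2 htx) hx.le) (div_nonneg ht hx.le) (by field_simp; ring)
  simp only [smul_eq_mul, mul_zero, zero_add, div_mul_cancel₀ t hx.ne'] at hchord
  calc t * g x ≤ (x - t) * g 0 + t * g x := by nlinarith [mul_nonneg (sub_nonneg.2 htx) hg₀]
    _ = x * ((x - t) / x * g 0 + t / x * g x) := by field_simp
    _ ≤ x * g t := by gcongr

lemma map_add_le {a b : ℝ} (ha : 0 ≤ a) (hb : 0 ≤ b) : g (a + b) ≤ g a + g b := by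
  rcases (add_nonneg ha hb).eq_or_lt with hab | hab
  · obtain ⟨rfl, rfl⟩ : a = 0 ∧ b = 0 := ⟨by linarith, by linarith⟩
    simpa using hg₀
  have hga := hg.mul_map_le_mul_map_of_le hg₀ ha (le_add_of_nonneg_right hb)
  have hgb := hg.mul_map_le_mul_map_of_le hg₀ hb (le_add_of_nonneg_left ha)
  exact le_of_mul_le_mul_left (by linarith) hab

end ConcaveOn

section Antiderivative

variable {G g : ℝ → ℝ} (hG : ∀ x ∈ Ici (0 : ℝ), HasDerivWithinAt G (g x) (Ici 0) x)
include hG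

lemma continuousOn_Ici_of_hasDerivWithinAt : ContinuousOn G (Ici 0) :=
  fun x hx ↦ (hG x hx).continuousWithinAt

lemma hasDerivAt_of_hasDerivWithinAt_Ici {x : ℝ} (hx : 0 < x) : HasDerivAt G (g x) x :=
  (hG x hx.le).hasDerivAt (Ici_mem_nhds hx)

variable (hg : ConcaveOn ℝ (Ici 0) g) (hg₀ : 0 ≤ g 0)
include hg hg₀

lemma sub_le_mul_add_sub_of_concaveOn {a b : ℝ} (ha : 0 ≤ a) (hb : 0 ≤ b) :
    G (a + b) - G a ≤ b * g a + (G b - G 0) := by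
  have hGc := continuousOn_Ici_of_hasDerivWithinAt hG
  have key := le_of_hasDerivAt_nonneg (f := fun s ↦ s * g a + G s - G (a + s))
    (f' := fun s ↦ g a + g s - g (a + s)) hb ?_ ?_ ?_
  · simp only [zero_mul, zero_add, add_zero] at key
    linarith
  · refine ((continuousOn_id.mul continuousOn_const).add (hGc.mono ?_)).sub
      (hGc.comp (continuousOn_const.add continuousOn_id) ?_)
    · exact fun s hs ↦ hs.1
    · exact fun s hs ↦ add_nonneg ha hs.1
  · intro s hs
    have hGs := hasDerivAt_of_hasDerivWithinAt_Ici hG hs.1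
    have hGas := hasDerivAt_of_hasDerivWithinAt_Ici hG (add_pos_of_nonneg_of_pos ha hs.1)
    exact ((hasDerivAt_mul_const (g a)).add hGs).sub (hGas.comp_const_add a s)
  · intro s hs
    linarith [hg.map_add_le hg₀ ha hs.1.le]

lemma mul_deriv_le_two_mul_sub_of_concaveOn {x : ℝ} (hx : 0 ≤ x) :
    x * g x ≤ 2 * (G x - G 0) := by
  rcases hx.eq_or_lt with rfl | hx
  · simp
  have hGc := continuousOn_Ici_of_hasDerivWithinAt hG
  have key := le_of_hasDerivAt_nonneg (f := fun t ↦ 2 * x * G t - t ^ 2 * g x)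
    (f' := fun t ↦ 2 * (x * g t - t * g x)) hx.le ?_ ?_ ?_
  · exact le_of_mul_le_mul_left (by linarith) hx
  · exact ((continuousOn_const.mul (hGc.mono fun t ht ↦ ht.1)).sub
      ((continuousOn_id.pow 2).mul continuousOn_const))
  · intro t ht
    have hGt := hasDerivAt_of_hasDerivWithinAt_Ici hG ht.1
    exact ((hGt.const_mul (2 * x)).sub ((hasDerivAt_pow 2 t).mul_const (g x))).congr_deriv
      (by ring)
  · intro t ht
    linarith [hg.mul_map_le_mul_map_of_le hg₀ ht.1.le ht.2.le]

end Antiderivative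

theorem stmt8_general (G g : ℝ → ℝ)
    (hG0 : G 0 = 0)
    (hderiv : ∀ x ∈ Set.Ici (0 : ℝ), HasDerivWithinAt G (g x) (Set.Ici 0) x)
    (hg0 : 0 ≤ g 0)
    (hconc : ConcaveOn ℝ (Set.Ici 0) g)
    (i j : ℕ) :
    ((i : ℝ) + (j : ℝ)) * (G ((i : ℝ) + (j : ℝ)) - G (i : ℝ) - G (j : ℝ)) ≤
      2 * ((i : ℝ) * G (j : ℝ) + (j : ℝ) * G (i : ℝ)) := by
  set a : ℝ := (i : ℝ)
  set b : ℝ := (j : ℝ)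
  have ha : 0 ≤ a := Nat.cast_nonneg i
  have hb : 0 ≤ b := Nat.cast_nonneg j
  have hDa := sub_le_mul_add_sub_of_concaveOn hderiv hconc hg0 ha hb
  have hDb := sub_le_mul_add_sub_of_concaveOn hderiv hconc hg0 hb ha
  have hxa := mul_deriv_le_two_mul_sub_of_concaveOn hderiv hconc hg0 ha
  have hxb := mul_deriv_le_two_mul_sub_of_concaveOn hderiv hconc hg0 hb
  rw [add_comm b a] at hDb
  rw [hG0, sub_zero] at hDa hDb hxa hxb
  calc (a + b) * (G (a + b) - G a - G b)
      = a * (G (a + b) - G a - G b) + b * (G (a + b) - G a - G b) := by ring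
    _ ≤ a * (b * g a) + b * (a * g b) := by gcongr <;> linarith
    _ = b * (a * g a) + a * (b * g b) := by ring
    _ ≤ b * (2 * G a) + a * (2 * G b) := by gcongr
    _ = 2 * (a * G b + b * G a) := by ring

/-- Lemma 3.5 ([BLL 2019, Proposition 7.1.9]): for `G` nonnegative, convex, `C¹` with
`G(0) = 0`, `G'(0) ≥ 0` and `G'` concave, one has
`(i+j)(G(i+j) - G(i) - G(j)) ≤ 2 (i G(j) + j G(i))`. -/
theorem stmt8 (G g : ℝ → ℝ)
    (hGnn : ∀ x : ℝ, 0 ≤ x → 0 ≤ G x) (hG0 : G 0 = 0)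
    (hconv : ConvexOn ℝ (Set.Ici 0) G)
    (hderiv : ∀ x ∈ Set.Ici (0 : ℝ), HasDerivWithinAt G (g x) (Set.Ici 0) x)
    (hgcont : ContinuousOn g (Set.Ici 0))
    (hg0 : 0 ≤ g 0)
    (hconc : ConcaveOn ℝ (Set.Ici 0) g)
    (i j : ℕ) (hi : 1 ≤ i) (hj : 1 ≤ j) :
    ((i : ℝ) + (j : ℝ)) * (G ((i : ℝ) + (j : ℝ)) - G (i : ℝ) - G (j : ℝ)) ≤
      2 * ((i : ℝ) * G (j : ℝ) + (j : ℝ) * G (i : ℝ)) :=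
  stmt8_general G g hG0 hderiv hg0 hconc i j
end

section
/- Assume B satisfies (H_B), and let (a^l_{j,k})_{j,k≥1} be a symmetric nonnegative kernel with a^l_{j,k} ≤ A l (j+k) for some constants A > 0 and l ≥ 1. Let w^l be a mass-conserving solution on [0,∞) of the discrete collision-induced breakage equation with kernel a^l such that w^l ∈ L^∞_loc([0,∞); Y_m) for every m > 1. Let (μ_i)_{i≥1} be a nonnegative sequence such that (i^{−m} μ_i)_{i≥1} is bounded for some m ≥ 1. Then for every t ≥ 0 the series Σ_{i≥1} μ_i w_i^l(t) converges, the function t ↦ Σ_{i≥1} μ_i w_i^l(t) is differentiable on [0,∞), and d/dt Σ_{i≥1} μ_i w_i^l = (1/2) Σ_{j=1}^∞ Σ_{k=1}^∞ ( Σ_{i=1}^{j+k−1} μ_i B_{j,k}^i − μ_j − μ_k ) a^l_{j,k} w_j^l w_k^l, where the double series converges absolutely. -/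
open MeasureTheory

/-- The moment of order `γ` of a sequence `y = (y_i)_{i ≥ 1}`. -/
noncomputable def mom (γ : ℝ) (y : ℕ → ℝ) : ℝ :=
  ∑' n : ℕ, ((n + 1 : ℕ) : ℝ) ^ γ * y (n + 1)

/-- Membership in the space `Y_γ`. -/
def inY (γ : ℝ) (y : ℕ → ℝ) : Prop :=
  Summable fun n : ℕ => ((n + 1 : ℕ) : ℝ) ^ γ * |y (n + 1)|

/-- The gain term `(1/2) Σ_{j=i+1}^∞ Σ_{k=1}^{j-1} B_{j-k,k}^i a_{j-k,k} w_{j-k} w_k`. -/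
noncomputable def gainT (a : ℕ → ℕ → ℝ) (B : ℕ → ℕ → ℕ → ℝ)
    (w : ℕ → ℝ → ℝ) (i : ℕ) (τ : ℝ) : ℝ :=
  (1 / 2) * ∑' n : ℕ, ∑ k ∈ Finset.Ico 1 (i + 1 + n),
    B (i + 1 + n - k) k i * a (i + 1 + n - k) k * w (i + 1 + n - k) τ * w k τ

/-- The loss term `Σ_{j=1}^∞ a_{i,j} w_i w_j`. -/
noncomputable def lossT (a : ℕ → ℕ → ℝ) (w : ℕ → ℝ → ℝ) (i : ℕ) (τ : ℝ) : ℝ :=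
  ∑' n : ℕ, a i (n + 1) * w i τ * w (n + 1) τ

/-- A solution on `[0,∞)` of the discrete collision-induced breakage equation with
kernel `a`, daughter distribution `B` and initial condition `win`. -/
def IsSol (a : ℕ → ℕ → ℝ) (B : ℕ → ℕ → ℕ → ℝ) (win : ℕ → ℝ)
    (w : ℕ → ℝ → ℝ) : Prop :=
  (∀ i, 1 ≤ i → ∀ t : ℝ, 0 ≤ t → 0 ≤ w i t) ∧
  (∀ i, 1 ≤ i → ContinuousOn (w i) (Set.Ici (0 : ℝ))) ∧
  (∀ i, 1 ≤ i → w i 0 = win i) ∧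
  (∀ i, 1 ≤ i → ∀ t : ℝ, 0 < t →
    IntegrableOn (lossT a w i) (Set.Ioc 0 t) ∧
    IntegrableOn (gainT a B w i) (Set.Ioc 0 t) ∧
    w i t = win i + ∫ τ in Set.Ioc (0 : ℝ) t, (gainT a B w i τ - lossT a w i τ))

/-- Mass conservation: `M_1(w(t)) = M_1(w^in)` for all `t ≥ 0`. -/
def MassConserving (win : ℕ → ℝ) (w : ℕ → ℝ → ℝ) : Prop :=
  ∀ t : ℝ, 0 ≤ t → inY 1 (fun i => w i t) ∧ mom 1 (fun i => w i t) = mom 1 win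

/-- Hypothesis (H_B) on the daughter distribution function. -/
def HB (B : ℕ → ℕ → ℕ → ℝ) : Prop :=
  ∀ j k : ℕ, 1 ≤ j → 1 ≤ k →
    (∀ i, 0 ≤ B j k i) ∧ (∀ i, B j k i = B k j i) ∧
    (∀ i, j + k ≤ i → B j k i = 0) ∧
    (∑ i ∈ Finset.Ico 1 (j + k), (i : ℝ) * B j k i = (j : ℝ) + (k : ℝ))

/-- Hypothesis (H_m): moment damping at every order `m > 1`. -/
def Hmom (B : ℕ → ℕ → ℕ → ℝ) : Prop :=
  ∀ m : ℝ, 1 < m → ∃ ε κ : ℝ, 0 < ε ∧ ε < 1 ∧ 1 ≤ κ ∧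
    ∀ j k : ℕ, 1 ≤ j → 1 ≤ k →
      ∑ i ∈ Finset.Ico 1 (j + k), (i : ℝ) ^ m * B j k i ≤
        (1 - ε) * ((j : ℝ) ^ m + (k : ℝ) ^ m) +
          κ * ((j : ℝ) * (k : ℝ) ^ (m - 1) + (j : ℝ) ^ (m - 1) * (k : ℝ))

/-- Hypothesis (H_2): at least two fragments in each collision. -/
def H2 (B : ℕ → ℕ → ℕ → ℝ) : Prop :=
  ∀ j k : ℕ, 1 ≤ j → 1 ≤ k → 2 ≤ ∑ i ∈ Finset.Ico 1 (j + k), B j k i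

/-- The collision kernel `a_{i,j} = A (i^α j^β + i^β j^α)`. -/
noncomputable def kerA (A α β : ℝ) (i j : ℕ) : ℝ :=
  A * ((i : ℝ) ^ α * (j : ℝ) ^ β + (i : ℝ) ^ β * (j : ℝ) ^ α)

/-- The truncated collision kernel
`a^l_{i,j} = A (min{i,l}^{α₊} i^{α-α₊} j^β + i^β min{j,l}^{α₊} j^{α-α₊})`. -/
noncomputable def kerTrunc (A α β : ℝ) (l : ℕ) (i j : ℕ) : ℝ :=
  A * (((min i l : ℕ) : ℝ) ^ max α 0 * (i : ℝ) ^ (α - max α 0) * (j : ℝ) ^ β +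
       (i : ℝ) ^ β * ((min j l : ℕ) : ℝ) ^ max α 0 * (j : ℝ) ^ (α - max α 0))

/-- The truncated initial condition `w^{in,l}`. -/
def winTrunc (l : ℕ) (win : ℕ → ℝ) (i : ℕ) : ℝ := if i ≤ l then win i else 0

/-- `w ∈ L^∞_loc([0,∞); Y_m)` for every `m > 1`. -/
def LocBddMoments (w : ℕ → ℝ → ℝ) : Prop :=
  ∀ m : ℝ, 1 < m → ∀ T : ℝ, 0 < T → ∃ C : ℝ,
    ∀ t ∈ Set.Icc (0 : ℝ) T, inY m (fun i => w i t) ∧ mom m (fun i => w i t) ≤ C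

/-- `sup_{t ∈ [0,T]} M_γ(w(t)) < ∞` for each `T > 0`. -/
def BddMoment (γ : ℝ) (w : ℕ → ℝ → ℝ) : Prop :=
  ∀ T : ℝ, 0 < T → ∃ C : ℝ,
    ∀ t ∈ Set.Icc (0 : ℝ) T, inY γ (fun i => w i t) ∧ mom γ (fun i => w i t) ≤ C

/-- A stationary solution of the discrete collision-induced breakage equation. -/
def IsStationaryCIB (a : ℕ → ℕ → ℝ) (B : ℕ → ℕ → ℕ → ℝ) (w : ℕ → ℝ) : Prop :=
  ∀ i, 1 ≤ i →
    Summable (fun n : ℕ => ∑ k ∈ Finset.Ico 1 (i + 1 + n),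
      B (i + 1 + n - k) k i * a (i + 1 + n - k) k * w (i + 1 + n - k) * w k) ∧
    Summable (fun n : ℕ => a i (n + 1) * w i * w (n + 1)) ∧
    (1 / 2) * (∑' n : ℕ, ∑ k ∈ Finset.Ico 1 (i + 1 + n),
        B (i + 1 + n - k) k i * a (i + 1 + n - k) k * w (i + 1 + n - k) * w k) =
      ∑' n : ℕ, a i (n + 1) * w i * w (n + 1)

/-!
Moments of order `m + 3` are bounded on compact time intervals and `a_{j,k} ≤ A l (j + k)`,
so every collision term `W_{j,k} a_{j,k} w_j w_k` with a weight `|W_{j,k}| ≤ K (j + k)^m` is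
dominated, uniformly for `t ∈ [0, T]`, by a multiple of `j⁻² k⁻²`. This gives absolute
convergence of all the series involved, continuity in time of the weighted collision rates, and
allows one to rearrange `Σ_i μ_i (gain_i - loss_i)` into
`½ Σ_{j,k} (Σ_i μ_i B_{j,k}^i - μ_j - μ_k) a_{j,k} w_j w_k`. Summing the integrated equations
`μ_i w_i(t) = μ_i w_i(0) + ∫_0^t μ_i (gain_i - loss_i)` over `i` (dominated convergence) writes
`Σ_i μ_i w_i(t)` as its initial value plus the integral of this continuous rate, and the
fundamental theorem of calculus gives the derivative.
-/

open Finset Set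

theorem HasSum.sum_antidiagonal {α A : Type*} [AddCommMonoid α] [TopologicalSpace α]
    [ContinuousAdd α] [RegularSpace α] [AddMonoid A] [HasAntidiagonal A] {f : A × A → α} {a : α}
    (hf : HasSum f a) : HasSum (fun n => ∑ p ∈ antidiagonal n, f p) a :=
  ((HasAntidiagonal.sigmaAntidiagonalEquivProd.hasSum_iff).mpr hf).sigma
    fun n => (antidiagonal n).hasSum f

/-- The gain series runs over the diagonals `j + k = i + 1 + n`; those with `j + k ≤ i`
contribute nothing. -/
theorem hasSum_sum_Ico_sub {α : Type*} [AddCommGroup α] [TopologicalSpace α]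
    [IsTopologicalAddGroup α] [RegularSpace α] {F : ℕ → ℕ → α} {a : α} {i : ℕ} (hi : 1 ≤ i)
    (hF : HasSum (fun p : ℕ × ℕ => F (p.1 + 1) (p.2 + 1)) a)
    (hvan : ∀ j k, 1 ≤ j → 1 ≤ k → j + k ≤ i → F j k = 0) :
    HasSum (fun n => ∑ k ∈ Ico 1 (i + 1 + n), F (i + 1 + n - k) k) a := by
  have hlow : ∑ N ∈ range (i - 1), ∑ p ∈ antidiagonal N, F (p.1 + 1) (p.2 + 1) = 0 := by
    refine sum_eq_zero fun N hN => sum_eq_zero fun p hp => hvan _ _ le_add_self le_add_self ?_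
    rw [HasAntidiagonal.mem_antidiagonal] at hp
    rw [Finset.mem_range] at hN
    omega
  have hshift := (hasSum_nat_add_iff' (i - 1)).mpr hF.sum_antidiagonal
  rw [hlow, sub_zero] at hshift
  refine hshift.congr_fun fun n => ?_
  rw [← Nat.sum_antidiagonal_swap]
  simp only [Prod.fst_swap, Prod.snd_swap]
  rw [Nat.sum_antidiagonal_eq_sum_range_succ (fun a b => F (b + 1) (a + 1)),
    sum_Ico_eq_sum_range, show i + 1 + n - 1 = (n + (i - 1)).succ by omega]
  refine sum_congr rfl fun k hk => ?_
  rw [Finset.mem_range] at hk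
  rw [show i + 1 + n - (1 + k) = n + (i - 1) - k + 1 by omega, add_comm 1 k]

theorem summable_inv_sq_mul_inv_sq :
    Summable fun p : ℕ × ℕ => (((p.1 + 1 : ℕ) : ℝ) ^ 2)⁻¹ * (((p.2 + 1 : ℕ) : ℝ) ^ 2)⁻¹ := by
  have h : Summable fun n : ℕ => (((n + 1 : ℕ) : ℝ) ^ 2)⁻¹ :=
    (summable_nat_add_iff 1).2 (Real.summable_nat_pow_inv.2 one_lt_two)
  exact h.mul_of_nonneg h (fun _ => by positivity) fun _ => by positivity

theorem rpow_mul_le_mul_inv_sq {x r u C : ℝ} (hx : 0 < x) (h : x ^ (r + 2) * u ≤ C) :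
    x ^ r * u ≤ C * (x ^ 2)⁻¹ := by
  rw [Real.rpow_add hx, Real.rpow_two] at h
  rw [le_mul_inv_iff₀ (by positivity)]
  linarith

/-- The estimate behind all the summability: since `x + y ≤ 2xy`, a weight of growth
`(x + y)^m` against a kernel of growth `x + y` costs `m + 1` moments in each variable, and two
more buy the decay `x⁻² y⁻²`. -/
theorem abs_weighted_collision_le {x y W a u v K c C m : ℝ} (hx : 1 ≤ x) (hy : 1 ≤ y) (hm : 0 ≤ m)
    (hW : |W| ≤ K * (x + y) ^ m) (ha₀ : 0 ≤ a) (ha : a ≤ c * (x + y)) (hu : 0 ≤ u) (hv : 0 ≤ v)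
    (hux : x ^ (m + 3) * u ≤ C) (hvy : y ^ (m + 3) * v ≤ C) :
    |W * a * u * v| ≤ K * (c * 2 ^ (m + 1) * C ^ 2 * ((x ^ 2)⁻¹ * (y ^ 2)⁻¹)) := by
  have hxy : 0 < x + y := by linarith
  have hK : 0 ≤ K := nonneg_of_mul_nonneg_left ((abs_nonneg W).trans hW) (by positivity)
  have hc : 0 ≤ c := nonneg_of_mul_nonneg_left (ha₀.trans ha) hxy
  have hx' : x ^ (m + 1) * u ≤ C * (x ^ 2)⁻¹ :=
    rpow_mul_le_mul_inv_sq (by linarith) (by rwa [show m + 1 + 2 = m + 3 by ring])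
  have hy' : y ^ (m + 1) * v ≤ C * (y ^ 2)⁻¹ :=
    rpow_mul_le_mul_inv_sq (by linarith) (by rwa [show m + 1 + 2 = m + 3 by ring])
  have hpow : (x + y) ^ (m + 1) ≤ 2 ^ (m + 1) * x ^ (m + 1) * y ^ (m + 1) := by
    calc (x + y) ^ (m + 1) ≤ (2 * (x * y)) ^ (m + 1) :=
          Real.rpow_le_rpow hxy.le (by nlinarith) (by linarith)
      _ = 2 ^ (m + 1) * x ^ (m + 1) * y ^ (m + 1) := by
          rw [Real.mul_rpow zero_le_two (by positivity), Real.mul_rpow (by linarith) (by linarith)]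
          ring
  calc |W * a * u * v| = |W| * a * u * v := by
        rw [abs_mul, abs_mul, abs_mul, abs_of_nonneg ha₀, abs_of_nonneg hu, abs_of_nonneg hv]
    _ ≤ K * (x + y) ^ m * (c * (x + y)) * u * v := by gcongr
    _ = K * c * (x + y) ^ (m + 1) * u * v := by rw [Real.rpow_add_one hxy.ne']; ring
    _ ≤ K * c * (2 ^ (m + 1) * x ^ (m + 1) * y ^ (m + 1)) * u * v := by gcongr
    _ = K * c * 2 ^ (m + 1) * (x ^ (m + 1) * u) * (y ^ (m + 1) * v) := by ring
    _ ≤ K * c * 2 ^ (m + 1) * (C * (x ^ 2)⁻¹) * (C * (y ^ 2)⁻¹) := by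
        gcongr
        exact mul_nonneg (mul_nonneg (mul_nonneg hK hc) (by positivity))
          (mul_nonneg ((mul_nonneg (by positivity) hu).trans hux) (by positivity))
    _ = K * (c * 2 ^ (m + 1) * C ^ 2 * ((x ^ 2)⁻¹ * (y ^ 2)⁻¹)) := by ring

section Moments

variable {w : ℕ → ℝ → ℝ}

theorem exists_rpow_mul_le_of_locBddMoments (hloc : LocBddMoments w)
    (hw : ∀ i, 1 ≤ i → ∀ t : ℝ, 0 ≤ t → 0 ≤ w i t) {q T : ℝ} (hq : 1 < q) (hT : 0 < T) :
    ∃ C, ∀ s ∈ Icc 0 T, ∀ j : ℕ, 1 ≤ j → (j : ℝ) ^ q * w j s ≤ C := by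
  obtain ⟨C, hC⟩ := hloc q hq T hT
  refine ⟨C, fun s hs j hj => ?_⟩
  obtain ⟨hY, hM⟩ := hC s hs
  obtain ⟨n, rfl⟩ : ∃ n, j = n + 1 := ⟨j - 1, by omega⟩
  have hsum : Summable fun n : ℕ => ((n + 1 : ℕ) : ℝ) ^ q * w (n + 1) s :=
    hY.congr fun n => by rw [abs_of_nonneg (hw _ (by omega) s hs.1)]
  exact (hsum.le_tsum n fun k _ => mul_nonneg (by positivity) (hw _ (by omega) s hs.1)).trans hM

theorem summable_mul_of_locBddMoments {μ : ℕ → ℝ} {m K t : ℝ} (hloc : LocBddMoments w)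
    (hw : ∀ i, 1 ≤ i → ∀ t : ℝ, 0 ≤ t → 0 ≤ w i t) (hμ : ∀ i, 1 ≤ i → 0 ≤ μ i) (hm : 0 < m)
    (hK0 : 0 ≤ K) (hK : ∀ i : ℕ, 1 ≤ i → μ i ≤ K * (i : ℝ) ^ m) (ht : 0 ≤ t) :
    Summable fun n => μ (n + 1) * w (n + 1) t := by
  obtain ⟨C, hC⟩ := hloc (m + 1) (by linarith) (t + 1) (by linarith)
  refine Summable.of_nonneg_of_le (fun n => mul_nonneg (hμ _ (by omega)) (hw _ (by omega) t ht))
    (fun n => ?_) ((hC t ⟨ht, by linarith⟩).1.mul_left K)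
  have hwn := hw (n + 1) (by omega) t ht
  rw [abs_of_nonneg hwn, ← mul_assoc]
  calc μ (n + 1) * w (n + 1) t ≤ K * ((n + 1 : ℕ) : ℝ) ^ m * w (n + 1) t := by
        gcongr; exact hK _ (by omega)
    _ ≤ K * ((n + 1 : ℕ) : ℝ) ^ (m + 1) * w (n + 1) t := by
        gcongr
        exacts [Nat.one_le_cast.2 (by omega), by linarith]

end Moments

def BoundedByPow (m K : ℝ) (W : ℕ → ℕ → ℝ) : Prop :=
  ∀ j k : ℕ, 1 ≤ j → 1 ≤ k → |W j k| ≤ K * ((j : ℝ) + k) ^ m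

section Weights

variable {m K K₁ K₂ : ℝ} {W₁ W₂ : ℕ → ℕ → ℝ} {μ : ℕ → ℝ} {B : ℕ → ℕ → ℕ → ℝ}

theorem BoundedByPow.add (h₁ : BoundedByPow m K₁ W₁) (h₂ : BoundedByPow m K₂ W₂) :
    BoundedByPow m (K₁ + K₂) fun j k => W₁ j k + W₂ j k := fun j k hj hk =>
  (abs_add_le _ _).trans ((add_le_add (h₁ j k hj hk) (h₂ j k hj hk)).trans_eq (by ring))

theorem BoundedByPow.sub (h₁ : BoundedByPow m K₁ W₁) (h₂ : BoundedByPow m K₂ W₂) :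
    BoundedByPow m (K₁ + K₂) fun j k => W₁ j k - W₂ j k := fun j k hj hk =>
  (abs_sub _ _).trans ((add_le_add (h₁ j k hj hk) (h₂ j k hj hk)).trans_eq (by ring))

theorem boundedByPow_fst (hμ : ∀ i, 1 ≤ i → 0 ≤ μ i) (hK0 : 0 ≤ K) (hm : 0 ≤ m)
    (hK : ∀ i : ℕ, 1 ≤ i → μ i ≤ K * (i : ℝ) ^ m) : BoundedByPow m K fun j _ => μ j :=
  fun j k hj _ => by
    rw [abs_of_nonneg (hμ j hj)]
    exact (hK j hj).trans (by gcongr; exact le_add_of_nonneg_right k.cast_nonneg)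

theorem boundedByPow_snd (hμ : ∀ i, 1 ≤ i → 0 ≤ μ i) (hK0 : 0 ≤ K) (hm : 0 ≤ m)
    (hK : ∀ i : ℕ, 1 ≤ i → μ i ≤ K * (i : ℝ) ^ m) : BoundedByPow m K fun _ k => μ k :=
  fun j k _ hk => by
    rw [abs_of_nonneg (hμ k hk)]
    exact (hK k hk).trans (by gcongr; exact le_add_of_nonneg_left j.cast_nonneg)

theorem HB.le_add (hB : HB B) {j k i : ℕ} (hj : 1 ≤ j) (hk : 1 ≤ k) (hi : 1 ≤ i) :
    B j k i ≤ j + k := by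
  obtain ⟨hnn, -, hvan, hmass⟩ := hB j k hj hk
  by_cases hik : i < j + k
  · calc B j k i ≤ i * B j k i := le_mul_of_one_le_left (hnn i) (by exact_mod_cast hi)
      _ ≤ ∑ i' ∈ Ico 1 (j + k), (i' : ℝ) * B j k i' :=
          single_le_sum (f := fun i' : ℕ => (i' : ℝ) * B j k i')
            (fun i' _ => mul_nonneg (Nat.cast_nonneg _) (hnn i')) (mem_Ico.2 ⟨hi, hik⟩)
      _ = j + k := hmass
  · rw [hvan i (by omega)]
    positivity

theorem boundedByPow_daughter (hB : HB B) {i : ℕ} (hi : 1 ≤ i) (hm : 1 ≤ m) :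
    BoundedByPow m 1 fun j k => B j k i := fun j k hj hk => by
  rw [abs_of_nonneg ((hB j k hj hk).1 i), one_mul]
  exact (hB.le_add hj hk hi).trans
    (Real.self_le_rpow_of_one_le (by norm_cast; omega) hm)

noncomputable def gainWeight (B : ℕ → ℕ → ℕ → ℝ) (μ : ℕ → ℝ) (j k : ℕ) : ℝ :=
  ∑ i ∈ Ico 1 (j + k), μ i * B j k i

theorem gainWeight_nonneg (hB : HB B) (hμ : ∀ i, 1 ≤ i → 0 ≤ μ i) {j k : ℕ} (hj : 1 ≤ j)
    (hk : 1 ≤ k) : 0 ≤ gainWeight B μ j k :=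
  sum_nonneg fun i hi => mul_nonneg (hμ i (mem_Ico.1 hi).1) ((hB j k hj hk).1 i)

/-- Since every fragment satisfies `i < j + k`, `i^m ≤ i (j + k)^(m-1)`, and mass conservation
in (H_B) sums `i B_{j,k}^i` to `j + k`. -/
theorem gainWeight_le (hB : HB B) (hK0 : 0 ≤ K) (hm : 1 ≤ m)
    (hK : ∀ i : ℕ, 1 ≤ i → μ i ≤ K * (i : ℝ) ^ m) {j k : ℕ} (hj : 1 ≤ j) (hk : 1 ≤ k) :
    gainWeight B μ j k ≤ K * ((j : ℝ) + k) ^ m := by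
  obtain ⟨hnn, -, -, hmass⟩ := hB j k hj hk
  have hjk : (0 : ℝ) < j + k := by positivity
  calc gainWeight B μ j k
      ≤ ∑ i ∈ Ico 1 (j + k), K * ((j : ℝ) + k) ^ (m - 1) * (i * B j k i) := by
        refine sum_le_sum fun i hi => ?_
        obtain ⟨hi1, hik⟩ := mem_Ico.1 hi
        have hi0 : (0 : ℝ) < i := by exact_mod_cast hi1
        calc μ i * B j k i ≤ K * (i : ℝ) ^ m * B j k i := by gcongr; exacts [hnn i, hK i hi1]
          _ = K * (i : ℝ) ^ (m - 1) * (i * B j k i) := by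
              rw [← sub_add_cancel m 1, Real.rpow_add_one hi0.ne', add_sub_cancel_right]; ring
          _ ≤ K * ((j : ℝ) + k) ^ (m - 1) * (i * B j k i) := by
              gcongr
              exacts [mul_nonneg hi0.le (hnn i), by exact_mod_cast hik.le]
    _ = K * ((j : ℝ) + k) ^ (m - 1) * (j + k) := by rw [← mul_sum, hmass]
    _ = K * ((j : ℝ) + k) ^ m := by
        rw [mul_assoc, ← Real.rpow_add_one hjk.ne', sub_add_cancel]

theorem boundedByPow_gainWeight (hB : HB B) (hμ : ∀ i, 1 ≤ i → 0 ≤ μ i) (hK0 : 0 ≤ K)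
    (hm : 1 ≤ m) (hK : ∀ i : ℕ, 1 ≤ i → μ i ≤ K * (i : ℝ) ^ m) :
    BoundedByPow m K (gainWeight B μ) := fun j k hj hk => by
  rw [abs_of_nonneg (gainWeight_nonneg hB hμ hj hk)]
  exact gainWeight_le hB hK0 hm hK hj hk

end Weights

noncomputable def collisionRate (al : ℕ → ℕ → ℝ) (w : ℕ → ℝ → ℝ) (W : ℕ → ℕ → ℝ) (s : ℝ) : ℝ :=
  ∑' p : ℕ × ℕ, W (p.1 + 1) (p.2 + 1) * al (p.1 + 1) (p.2 + 1) * w (p.1 + 1) s * w (p.2 + 1) s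

section Collisions

variable {al : ℕ → ℕ → ℝ} {w : ℕ → ℝ → ℝ} {c m : ℝ}

theorem exists_summable_collision_majorant (hal : ∀ j k, 1 ≤ j → 1 ≤ k → 0 ≤ al j k)
    (hbd : ∀ j k, 1 ≤ j → 1 ≤ k → al j k ≤ c * ((j : ℝ) + (k : ℝ)))
    (hw : ∀ i, 1 ≤ i → ∀ t : ℝ, 0 ≤ t → 0 ≤ w i t) (hloc : LocBddMoments w) (hm : 0 ≤ m)
    {T : ℝ} (hT : 0 < T) :
    ∃ u : ℕ × ℕ → ℝ, Summable u ∧ ∀ s ∈ Icc 0 T, ∀ {W : ℕ → ℕ → ℝ} {K : ℝ},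
      BoundedByPow m K W → ∀ p : ℕ × ℕ,
        |W (p.1 + 1) (p.2 + 1) * al (p.1 + 1) (p.2 + 1) * w (p.1 + 1) s * w (p.2 + 1) s| ≤
          K * u p := by
  obtain ⟨C, hC⟩ := exists_rpow_mul_le_of_locBddMoments hloc hw (q := m + 3) (by linarith) hT
  refine ⟨_, summable_inv_sq_mul_inv_sq.mul_left (c * 2 ^ (m + 1) * C ^ 2),
    fun s hs W K hW p => ?_⟩
  have h1 : ∀ n : ℕ, (1 : ℝ) ≤ ((n + 1 : ℕ) : ℝ) := fun n => Nat.one_le_cast.2 (by omega)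
  exact abs_weighted_collision_le (h1 _) (h1 _) hm (hW _ _ (by omega) (by omega))
    (hal _ _ (by omega) (by omega)) (hbd _ _ (by omega) (by omega)) (hw _ (by omega) s hs.1)
    (hw _ (by omega) s hs.1) (hC s hs _ (by omega)) (hC s hs _ (by omega))

theorem summable_abs_collision (hal : ∀ j k, 1 ≤ j → 1 ≤ k → 0 ≤ al j k)
    (hbd : ∀ j k, 1 ≤ j → 1 ≤ k → al j k ≤ c * ((j : ℝ) + (k : ℝ)))
    (hw : ∀ i, 1 ≤ i → ∀ t : ℝ, 0 ≤ t → 0 ≤ w i t) (hloc : LocBddMoments w) (hm : 0 ≤ m)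
    {W : ℕ → ℕ → ℝ} {K : ℝ} (hW : BoundedByPow m K W) {s : ℝ} (hs : 0 ≤ s) :
    Summable fun p : ℕ × ℕ =>
      |W (p.1 + 1) (p.2 + 1) * al (p.1 + 1) (p.2 + 1) * w (p.1 + 1) s * w (p.2 + 1) s| := by
  obtain ⟨u, hu, hbound⟩ :=
    exists_summable_collision_majorant hal hbd hw hloc hm (T := s + 1) (by linarith)
  exact Summable.of_nonneg_of_le (fun _ => abs_nonneg _) (hbound s ⟨hs, by linarith⟩ hW)
    (hu.mul_left K)

theorem continuousOn_collisionRate (hal : ∀ j k, 1 ≤ j → 1 ≤ k → 0 ≤ al j k)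
    (hbd : ∀ j k, 1 ≤ j → 1 ≤ k → al j k ≤ c * ((j : ℝ) + (k : ℝ)))
    (hw : ∀ i, 1 ≤ i → ∀ t : ℝ, 0 ≤ t → 0 ≤ w i t)
    (hwc : ∀ i, 1 ≤ i → ContinuousOn (w i) (Ici 0)) (hloc : LocBddMoments w) (hm : 0 ≤ m)
    {W : ℕ → ℕ → ℝ} {K : ℝ} (hW : BoundedByPow m K W) :
    ContinuousOn (collisionRate al w W) (Ici 0) := by
  refine continuousOn_of_locally_continuousOn fun x hx => ⟨Iio (x + 1), isOpen_Iio, by simp, ?_⟩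
  obtain ⟨u, hu, hbound⟩ :=
    exists_summable_collision_majorant hal hbd hw hloc hm (T := x + 1) (by linarith [mem_Ici.1 hx])
  have hwc' : ∀ i, 1 ≤ i → ContinuousOn (w i) (Icc 0 (x + 1)) :=
    fun i hi => (hwc i hi).mono Icc_subset_Ici_self
  refine (continuousOn_tsum (fun p => ?_) (hu.mul_left K) fun p s hs => hbound s hs hW p).mono
    fun s hs => ⟨hs.1, hs.2.le⟩
  exact (continuousOn_const.mul (hwc' _ (by omega))).mul (hwc' _ (by omega))

theorem collisionRate_sub {W W₁ W₂ : ℕ → ℕ → ℝ} {s : ℝ} (hW : ∀ j k, W j k = W₁ j k - W₂ j k)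
    (h₁ : Summable fun p : ℕ × ℕ =>
      W₁ (p.1 + 1) (p.2 + 1) * al (p.1 + 1) (p.2 + 1) * w (p.1 + 1) s * w (p.2 + 1) s)
    (h₂ : Summable fun p : ℕ × ℕ =>
      W₂ (p.1 + 1) (p.2 + 1) * al (p.1 + 1) (p.2 + 1) * w (p.1 + 1) s * w (p.2 + 1) s) :
    collisionRate al w W s = collisionRate al w W₁ s - collisionRate al w W₂ s := by
  rw [collisionRate, collisionRate, collisionRate, ← h₁.tsum_sub h₂]
  exact tsum_congr fun p => by rw [hW]; ring

end Collisions

section Rates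

variable {al : ℕ → ℕ → ℝ} {B : ℕ → ℕ → ℕ → ℝ} {w : ℕ → ℝ → ℝ} {μ : ℕ → ℝ} {τ : ℝ}

theorem gainT_nonneg (hB : HB B) (hal : ∀ j k, 1 ≤ j → 1 ≤ k → 0 ≤ al j k)
    (hw : ∀ j, 1 ≤ j → 0 ≤ w j τ) (i : ℕ) : 0 ≤ gainT al B w i τ :=
  mul_nonneg (by norm_num) <| tsum_nonneg fun n => sum_nonneg fun k hk => by
    obtain ⟨hk1, hk⟩ := mem_Ico.1 hk
    have hj : 1 ≤ i + 1 + n - k := by omega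
    exact mul_nonneg (mul_nonneg (mul_nonneg ((hB _ _ hj hk1).1 i) (hal _ _ hj hk1)) (hw _ hj))
      (hw _ hk1)

theorem lossT_nonneg (hal : ∀ j k, 1 ≤ j → 1 ≤ k → 0 ≤ al j k)
    (hw : ∀ j, 1 ≤ j → 0 ≤ w j τ) {i : ℕ} (hi : 1 ≤ i) : 0 ≤ lossT al w i τ :=
  tsum_nonneg fun n => mul_nonneg (mul_nonneg (hal _ _ hi (by omega)) (hw i hi)) (hw _ (by omega))

theorem gainT_eq_half_collisionRate (hB : HB B) {i : ℕ} (hi : 1 ≤ i)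
    (hsum : Summable fun p : ℕ × ℕ =>
      B (p.1 + 1) (p.2 + 1) i * al (p.1 + 1) (p.2 + 1) * w (p.1 + 1) τ * w (p.2 + 1) τ) :
    gainT al B w i τ = (1 / 2) * collisionRate al w (fun j k => B j k i) τ := by
  have h := hasSum_sum_Ico_sub (F := fun j k => B j k i * al j k * w j τ * w k τ) hi hsum.hasSum
    fun j k hj hk hjk => by simp only [(hB j k hj hk).2.2.1 i hjk, zero_mul]
  exact congrArg (fun x => 1 / 2 * x) h.tsum_eq

/-- All terms of the triple series over `(j, k, i)` are nonnegative, so it may be summed in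
either order. -/
theorem hasSum_mul_gainT (hB : HB B) (hμ : ∀ i, 1 ≤ i → 0 ≤ μ i)
    (hal : ∀ j k, 1 ≤ j → 1 ≤ k → 0 ≤ al j k) (hw : ∀ j, 1 ≤ j → 0 ≤ w j τ)
    (hsumB : ∀ i, 1 ≤ i → Summable fun p : ℕ × ℕ =>
      B (p.1 + 1) (p.2 + 1) i * al (p.1 + 1) (p.2 + 1) * w (p.1 + 1) τ * w (p.2 + 1) τ)
    (hsumG : Summable fun p : ℕ × ℕ => gainWeight B μ (p.1 + 1) (p.2 + 1) *
      al (p.1 + 1) (p.2 + 1) * w (p.1 + 1) τ * w (p.2 + 1) τ) :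
    HasSum (fun n => μ (n + 1) * gainT al B w (n + 1) τ)
      ((1 / 2) * collisionRate al w (gainWeight B μ) τ) := by
  set f : (ℕ × ℕ) × ℕ → ℝ := fun q => μ (q.2 + 1) * (B (q.1.1 + 1) (q.1.2 + 1) (q.2 + 1) *
    al (q.1.1 + 1) (q.1.2 + 1) * w (q.1.1 + 1) τ * w (q.1.2 + 1) τ) with hf
  have hf0 : 0 ≤ f := fun q => mul_nonneg (hμ _ (by omega)) <| mul_nonneg (mul_nonneg
    (mul_nonneg ((hB _ _ (by omega) (by omega)).1 _) (hal _ _ (by omega) (by omega)))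
    (hw _ (by omega))) (hw _ (by omega))
  have hfiber : ∀ p : ℕ × ℕ, HasSum (fun n => f (p, n)) (gainWeight B μ (p.1 + 1) (p.2 + 1) *
      al (p.1 + 1) (p.2 + 1) * w (p.1 + 1) τ * w (p.2 + 1) τ) := by
    intro p
    have hval : gainWeight B μ (p.1 + 1) (p.2 + 1) * al (p.1 + 1) (p.2 + 1) * w (p.1 + 1) τ *
        w (p.2 + 1) τ = ∑ n ∈ range (p.1 + p.2 + 1), f (p, n) := by
      rw [gainWeight, sum_Ico_eq_sum_range, show p.1 + 1 + (p.2 + 1) - 1 = p.1 + p.2 + 1 by omega,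
        sum_mul, sum_mul, sum_mul]
      exact sum_congr rfl fun n _ => by rw [add_comm 1 n]; ring
    rw [hval]
    exact hasSum_sum_of_ne_finset_zero fun n hn => by
      rw [Finset.mem_range, not_lt] at hn
      simp only [hf]
      rw [(hB (p.1 + 1) (p.2 + 1) (by omega) (by omega)).2.2.1 (n + 1) (by omega)]
      ring
  have hfs : Summable f := (summable_prod_of_nonneg hf0).2
    ⟨fun p => (hfiber p).summable, hsumG.congr fun p => ((hfiber p).tsum_eq).symm⟩
  have htotal : HasSum f (collisionRate al w (gainWeight B μ) τ) := by
    rw [collisionRate, ← tsum_congr fun p => (hfiber p).tsum_eq,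
      ← hfs.tsum_prod' fun p => (hfiber p).summable]
    exact hfs.hasSum
  have hswap := (Equiv.prodComm ℕ (ℕ × ℕ)).hasSum_iff.2 htotal
  refine ((hswap.prod_fiberwise fun n => (hsumB (n + 1) (by omega)).hasSum.mul_left (μ (n + 1))
    ).mul_left (1 / 2)).congr_fun fun n => ?_
  rw [gainT_eq_half_collisionRate hB (by omega) (hsumB _ (by omega)), collisionRate]
  ring

/-- Symmetry of the kernel splits `Σ_{j,k} μ_j a_{j,k} w_j w_k` evenly between `μ_j` and `μ_k`. -/
theorem hasSum_mul_lossT (hsym : ∀ i j, 1 ≤ i → 1 ≤ j → al i j = al j i)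
    (hsum : Summable fun p : ℕ × ℕ =>
      μ (p.1 + 1) * al (p.1 + 1) (p.2 + 1) * w (p.1 + 1) τ * w (p.2 + 1) τ) :
    HasSum (fun n => μ (n + 1) * lossT al w (n + 1) τ)
      ((1 / 2) * collisionRate al w (fun j k => μ j + μ k) τ) := by
  have hL := hsum.hasSum
  have hL' : HasSum (fun p : ℕ × ℕ =>
      μ (p.2 + 1) * al (p.1 + 1) (p.2 + 1) * w (p.1 + 1) τ * w (p.2 + 1) τ) _ :=
    ((Equiv.prodComm ℕ ℕ).hasSum_iff.2 hL).congr_fun fun p => by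
      simp only [Function.comp, Equiv.prodComm_apply, Prod.fst_swap, Prod.snd_swap]
      rw [hsym (p.1 + 1) (p.2 + 1) (by omega) (by omega)]
      ring
  have hrate : collisionRate al w (fun j k => μ j + μ k) τ = 2 * ∑' p : ℕ × ℕ,
      μ (p.1 + 1) * al (p.1 + 1) (p.2 + 1) * w (p.1 + 1) τ * w (p.2 + 1) τ :=
    ((hL.add hL').congr_fun fun p => by ring).tsum_eq.trans (two_mul _).symm
  rw [hrate, ← mul_assoc, one_div, inv_mul_cancel₀ two_ne_zero, one_mul]
  refine hL.prod_fiberwise fun n => ?_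
  simpa only [lossT, ← tsum_mul_left, mul_assoc] using (hsum.prod_factor n).hasSum

end Rates

/-- The sum over `i` may be taken under the integral because the nonnegative gain and loss
series are dominated by their integrable sums. -/
theorem tsum_mul_eq_add_integral {al : ℕ → ℕ → ℝ} {B : ℕ → ℕ → ℕ → ℝ} {win μ : ℕ → ℝ}
    {w : ℕ → ℝ → ℝ} {Gp Gm G : ℝ → ℝ} (hB : HB B) (hal : ∀ j k, 1 ≤ j → 1 ≤ k → 0 ≤ al j k)
    (hsol : IsSol al B win w) (hμ : ∀ i, 1 ≤ i → 0 ≤ μ i)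
    (hgain : ∀ τ, 0 ≤ τ → HasSum (fun n => μ (n + 1) * gainT al B w (n + 1) τ) (Gp τ))
    (hloss : ∀ τ, 0 ≤ τ → HasSum (fun n => μ (n + 1) * lossT al w (n + 1) τ) (Gm τ))
    (hGp : ContinuousOn Gp (Ici 0)) (hGm : ContinuousOn Gm (Ici 0))
    (hG : ∀ τ, 0 ≤ τ → G τ = Gp τ - Gm τ) (h0 : Summable fun n => μ (n + 1) * w (n + 1) 0)
    {s : ℝ} (hs : 0 < s) :
    ∑' n, μ (n + 1) * w (n + 1) s = ∑' n, μ (n + 1) * w (n + 1) 0 + ∫ τ in Ioc 0 s, G τ := by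
  obtain ⟨hw, -, hw0, hint⟩ := hsol
  have hmem : ∀ᵐ τ ∂(volume.restrict (Ioc 0 s)), τ ∈ Ioc 0 s :=
    ae_restrict_mem measurableSet_Ioc
  have hincr (n : ℕ) : ∫ τ in Ioc 0 s, μ (n + 1) * (gainT al B w (n + 1) τ - lossT al w (n + 1) τ)
      = μ (n + 1) * w (n + 1) s - μ (n + 1) * w (n + 1) 0 := by
    rw [integral_const_mul, (hint (n + 1) (by omega) s hs).2.2, hw0 _ (by omega)]
    ring
  have hbound_int : IntegrableOn (fun τ => Gp τ + Gm τ) (Ioc 0 s) :=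
    ((hGp.add hGm).mono Icc_subset_Ici_self).integrableOn_Icc.mono_set Ioc_subset_Icc_self
  have hlim := hasSum_integral_of_dominated_convergence (μ := volume.restrict (Ioc 0 s))
    (F := fun n τ => μ (n + 1) * (gainT al B w (n + 1) τ - lossT al w (n + 1) τ)) (f := G)
    (fun n τ => μ (n + 1) * gainT al B w (n + 1) τ + μ (n + 1) * lossT al w (n + 1) τ)
    (fun n => (((hint (n + 1) (by omega) s hs).2.1.sub
      (hint (n + 1) (by omega) s hs).1).const_mul _).aestronglyMeasurable)
    (fun n => hmem.mono fun τ hτ => by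
      have hwτ : ∀ j, 1 ≤ j → 0 ≤ w j τ := fun j hj => hw j hj τ hτ.1.le
      have hg := mul_nonneg (hμ (n + 1) (by omega)) (gainT_nonneg hB hal hwτ (n + 1))
      have hl := mul_nonneg (hμ (n + 1) (by omega)) (lossT_nonneg hal hwτ (by omega : 1 ≤ n + 1))
      rw [Real.norm_eq_abs, mul_sub]
      exact (abs_sub _ _).trans_eq (by rw [abs_of_nonneg hg, abs_of_nonneg hl]))
    (hmem.mono fun τ hτ => ((hgain τ hτ.1.le).add (hloss τ hτ.1.le)).summable)
    (hbound_int.congr (hmem.mono fun τ hτ =>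
      ((hgain τ hτ.1.le).add (hloss τ hτ.1.le)).tsum_eq.symm))
    (hmem.mono fun τ hτ => by
      rw [hG τ hτ.1.le]
      exact ((hgain τ hτ.1.le).sub (hloss τ hτ.1.le)).congr_fun fun n => mul_sub _ _ _)
  simp only [hincr] at hlim
  rw [((hlim.add h0.hasSum).congr_fun fun n => by ring).tsum_eq, add_comm]

theorem hasDerivWithinAt_Ici_of_eq_add_integral {F G : ℝ → ℝ} {a t : ℝ}
    (hG : ContinuousOn G (Ici a)) (hF : ∀ s, a < s → F s = F a + ∫ x in a..s, G x)
    (ht : a ≤ t) : HasDerivWithinAt F (G t) (Ici a) t := by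
  -- `G ∘ max a` is a continuous extension of `G` to the whole line.
  have hG' : Continuous fun x => G (max a x) :=
    hG.comp_continuous (continuous_const.max continuous_id) fun x => le_max_left a x
  have hF' : ∀ s ∈ Ici a, F s = F a + ∫ x in a..s, G (max a x) := by
    intro s hs
    rcases (mem_Ici.1 hs).eq_or_lt with rfl | has
    · simp
    · rw [hF s has]
      congr 1
      refine intervalIntegral.integral_congr fun x hx => ?_
      rw [uIcc_of_le has.le] at hx
      simp [max_eq_right hx.1]
  have hd := ((hG'.integral_hasStrictDerivAt a t).hasDerivAt.const_add (F a)).hasDerivWithinAt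
    (s := Ici a)
  rw [max_eq_right ht] at hd
  exact hd.congr hF' (hF' t ht)

theorem stmt9_general (B : ℕ → ℕ → ℕ → ℝ) (hB : HB B)
    (al : ℕ → ℕ → ℝ) (A l : ℝ)
    (hsym : ∀ i j, 1 ≤ i → 1 ≤ j → al i j = al j i)
    (hnn : ∀ i j, 1 ≤ i → 1 ≤ j → 0 ≤ al i j)
    (hbd : ∀ i j, 1 ≤ i → 1 ≤ j → al i j ≤ A * l * ((i : ℝ) + (j : ℝ)))
    (win : ℕ → ℝ) (w : ℕ → ℝ → ℝ)
    (hsol : IsSol al B win w) (hloc : LocBddMoments w)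
    (μ : ℕ → ℝ) (hμ : ∀ i, 1 ≤ i → 0 ≤ μ i)
    (hgrow : ∃ m : ℝ, 1 ≤ m ∧ ∃ K : ℝ, ∀ i : ℕ, 1 ≤ i → μ i ≤ K * (i : ℝ) ^ m) :
    ∀ t : ℝ, 0 ≤ t →
      Summable (fun n : ℕ => μ (n + 1) * w (n + 1) t) ∧
      Summable (fun p : ℕ × ℕ =>
        |((∑ i ∈ Finset.Ico 1 (p.1 + 1 + (p.2 + 1)), μ i * B (p.1 + 1) (p.2 + 1) i) -
            μ (p.1 + 1) - μ (p.2 + 1)) * al (p.1 + 1) (p.2 + 1) *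
          w (p.1 + 1) t * w (p.2 + 1) t|) ∧
      HasDerivWithinAt (fun s : ℝ => ∑' n : ℕ, μ (n + 1) * w (n + 1) s)
        ((1 / 2) * ∑' p : ℕ × ℕ,
          ((∑ i ∈ Finset.Ico 1 (p.1 + 1 + (p.2 + 1)), μ i * B (p.1 + 1) (p.2 + 1) i) -
              μ (p.1 + 1) - μ (p.2 + 1)) * al (p.1 + 1) (p.2 + 1) *
            w (p.1 + 1) t * w (p.2 + 1) t)
        (Set.Ici 0) t := by
  obtain ⟨m, hm, K, hK⟩ := hgrow
  have hK0 : 0 ≤ K := by simpa using (hμ 1 le_rfl).trans (hK 1 le_rfl)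
  have hm0 : 0 ≤ m := by linarith
  have hw := hsol.1
  have hmoment {t : ℝ} (ht : 0 ≤ t) :=
    summable_mul_of_locBddMoments hloc hw hμ (by linarith) hK0 hK ht
  have hsum {W : ℕ → ℕ → ℝ} {K' : ℝ} (hW : BoundedByPow m K' W) {τ : ℝ} (hτ : 0 ≤ τ) :=
    summable_abs_collision hnn hbd hw hloc hm0 hW hτ
  have hrate {W : ℕ → ℕ → ℝ} {K' : ℝ} (hW : BoundedByPow m K' W) :
      ContinuousOn (fun τ => 1 / 2 * collisionRate al w W τ) (Ici 0) :=
    continuousOn_const.mul (continuousOn_collisionRate hnn hbd hw hsol.2.1 hloc hm0 hW)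
  have hfst := boundedByPow_fst hμ hK0 hm0 hK
  have hsnd := boundedByPow_snd hμ hK0 hm0 hK
  have hgw := boundedByPow_gainWeight hB hμ hK0 hm hK
  have hdiff : BoundedByPow m (K + K + K) fun j k => gainWeight B μ j k - μ j - μ k :=
    (hgw.sub hfst).sub hsnd
  have hgain (τ : ℝ) (hτ : 0 ≤ τ) := hasSum_mul_gainT hB hμ hnn (fun j hj => hw j hj τ hτ)
    (fun i hi => (hsum (boundedByPow_daughter hB hi hm) hτ).of_abs) (hsum hgw hτ).of_abs
  have hloss (τ : ℝ) (hτ : 0 ≤ τ) := hasSum_mul_lossT hsym (hsum hfst hτ).of_abs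
  intro t ht
  refine ⟨hmoment ht, hsum hdiff ht,
    hasDerivWithinAt_Ici_of_eq_add_integral (hrate hdiff) (fun s hs => ?_) ht⟩
  rw [intervalIntegral.integral_of_le hs.le]
  refine tsum_mul_eq_add_integral hB hnn hsol hμ hgain hloss (hrate hgw) (hrate (hfst.add hsnd))
    (fun τ hτ => ?_) (hmoment le_rfl) hs
  rw [← mul_sub, collisionRate_sub (W₁ := gainWeight B μ) (W₂ := fun j k => μ j + μ k)
    (fun j k => sub_sub _ _ _) (hsum hgw hτ).of_abs (hsum (hfst.add hsnd) hτ).of_abs]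

/-- Lemma 3.2: the generalized moment identity for solutions of the truncated system. -/
theorem stmt9 (B : ℕ → ℕ → ℕ → ℝ) (hB : HB B)
    (al : ℕ → ℕ → ℝ) (A l : ℝ) (hA : 0 < A) (hl : 1 ≤ l)
    (hsym : ∀ i j, 1 ≤ i → 1 ≤ j → al i j = al j i)
    (hnn : ∀ i j, 1 ≤ i → 1 ≤ j → 0 ≤ al i j)
    (hbd : ∀ i j, 1 ≤ i → 1 ≤ j → al i j ≤ A * l * ((i : ℝ) + (j : ℝ)))
    (win : ℕ → ℝ) (w : ℕ → ℝ → ℝ)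
    (hsol : IsSol al B win w) (hmc : MassConserving win w) (hloc : LocBddMoments w)
    (μ : ℕ → ℝ) (hμ : ∀ i, 1 ≤ i → 0 ≤ μ i)
    (hgrow : ∃ m : ℝ, 1 ≤ m ∧ ∃ K : ℝ, ∀ i : ℕ, 1 ≤ i → μ i ≤ K * (i : ℝ) ^ m) :
    ∀ t : ℝ, 0 ≤ t →
      Summable (fun n : ℕ => μ (n + 1) * w (n + 1) t) ∧
      Summable (fun p : ℕ × ℕ =>
        |((∑ i ∈ Finset.Ico 1 (p.1 + 1 + (p.2 + 1)), μ i * B (p.1 + 1) (p.2 + 1) i) -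
            μ (p.1 + 1) - μ (p.2 + 1)) * al (p.1 + 1) (p.2 + 1) *
          w (p.1 + 1) t * w (p.2 + 1) t|) ∧
      HasDerivWithinAt (fun s : ℝ => ∑' n : ℕ, μ (n + 1) * w (n + 1) s)
        ((1 / 2) * ∑' p : ℕ × ℕ,
          ((∑ i ∈ Finset.Ico 1 (p.1 + 1 + (p.2 + 1)), μ i * B (p.1 + 1) (p.2 + 1) i) -
              μ (p.1 + 1) - μ (p.2 + 1)) * al (p.1 + 1) (p.2 + 1) *
            w (p.1 + 1) t * w (p.2 + 1) t)
        (Set.Ici 0) t :=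
  stmt9_general B hB al A l hsym hnn hbd win w hsol hloc μ hμ hgrow
end

section
/- Let m > 1, β ∈ (0,1], and C₁, C₂ > 0, and let φ : [0,∞) → [0,∞) be continuously differentiable and satisfy φ'(t) + C₁ φ(t)^{(m+β−1)/(m−1)} ≤ C₂ for all t ≥ 0. Set X₂ = m/(β C₁) and X₁ = (m C₂/C₁)^{β/(m+β−1)}. Then: (i) the function X(t) = (X₁ + X₂/t)^{(m−1)/β} satisfies X'(t) + C₁ X(t)^{(m+β−1)/(m−1)} ≥ C₂ for all t > 0; (ii) φ(t) ≤ (X₁ + X₂/t)^{(m−1)/β} for all t > 0; and (iii) φ(t) ≤ max{ φ(0), (C₂/C₁)^{(m−1)/(m+β−1)} } for all t ≥ 0. -/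
/-!
Comparison with barriers. If `B` is a strict supersolution, `B' + C₁ B ^ p > C₂`, and `φ ≤ B` at
the left end of an interval, then `φ` can never catch up with `B`: at a first contact point
`φ' ≤ C₂ - C₁ φ ^ p = C₂ - C₁ B ^ p < B'`. Constants above `(C₂ / C₁) ^ (1 / p)` are such barriers,
which gives the invariance bound. So is `X t = (X₁ + X₂ / t) ^ ((m - 1) / β)`: writing
`Y = X₁ + X₂ / t`, one has `X ^ p = Y ^ 2 * Y ^ ((m - 1) / β - 1)`; the share `C₁ / m` of
`C₁ X ^ p` exceeds `C₂` because `Y > X₁`, and the remaining share dominates `-X'` because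
`Y ≥ X₂ / t`. Since `X` blows up at `0⁺`, it lies above `φ` on a short initial interval, and
comparison from there gives `φ ≤ X`.
-/

open Real Set Filter Topology

theorem hasDerivAt_rpow_const_add_div {a b r t : ℝ} (ht : t ≠ 0) (hpos : 0 < a + b / t) :
    HasDerivAt (fun s => (a + b / s) ^ r) (-(r * b / t ^ 2) * (a + b / t) ^ (r - 1)) t := by
  have hinv : HasDerivAt (fun s => a + b / s) (-(b / t ^ 2)) t := by
    simpa [div_eq_mul_inv] using ((hasDerivAt_inv ht).const_mul b).const_add a
  convert hinv.rpow_const (p := r) (Or.inl hpos.ne') using 1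
  ring

theorem tendsto_rpow_const_add_div_nhdsGT_zero {a b r : ℝ} (hb : 0 < b) (hr : 0 < r) :
    Tendsto (fun s => (a + b / s) ^ r) (𝓝[>] 0) atTop := by
  have hdiv : Tendsto (fun s : ℝ => b / s) (𝓝[>] 0) atTop := by
    simpa only [div_eq_mul_inv] using tendsto_inv_nhdsGT_zero.const_mul_atTop hb
  exact (tendsto_rpow_atTop hr).comp (tendsto_atTop_add_const_left _ a hdiv)

theorem rpow_const_add_div_strict_supersolution {m β C₁ C₂ a b t : ℝ} (hm : 1 < m) (hβ : 0 < β)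
    (hC₁ : 0 < C₁) (ha : 0 ≤ a) (haC : m * C₂ ≤ C₁ * a ^ ((m + β - 1) / β))
    (hb : m ≤ β * C₁ * b) (ht : 0 < t) :
    C₂ < -((m - 1) / β * b / t ^ 2) * (a + b / t) ^ ((m - 1) / β - 1) +
      C₁ * ((a + b / t) ^ ((m - 1) / β)) ^ ((m + β - 1) / (m - 1)) := by
  have hm1 : m - 1 ≠ 0 := by linarith
  have hb0 : 0 < b := pos_of_mul_pos_right (by linarith) (mul_pos hβ hC₁).le
  set Y := a + b / t
  have hbt : 0 < b / t := div_pos hb0 ht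
  have haY : a < Y := by linarith
  have hY0 : 0 < Y := ha.trans_lt haY
  have hpow : (Y ^ ((m - 1) / β)) ^ ((m + β - 1) / (m - 1)) = Y ^ ((m + β - 1) / β) := by
    rw [← rpow_mul hY0.le]
    congr 1
    field_simp
  have hsplit : Y ^ ((m + β - 1) / β) = Y ^ ((m - 1) / β - 1) * Y ^ 2 := by
    rw [← rpow_natCast, ← rpow_add hY0]
    congr 1
    push_cast
    field_simp
    ring
  have hgrowth : m * C₂ < C₁ * Y ^ ((m + β - 1) / β) :=
    haC.trans_lt (mul_lt_mul_of_pos_left (rpow_lt_rpow ha haY (div_pos (by linarith) hβ)) hC₁)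
  have hdecay : m * ((m - 1) / β * b / t ^ 2) ≤ (m - 1) * C₁ * Y ^ 2 := by
    have hmβ : m / β ≤ C₁ * b := by rw [div_le_iff₀ hβ]; linarith
    calc m * ((m - 1) / β * b / t ^ 2) = (m - 1) * (m / β) * (b / t ^ 2) := by ring
      _ ≤ (m - 1) * (C₁ * b) * (b / t ^ 2) := by gcongr
      _ = (m - 1) * C₁ * (b / t) ^ 2 := by ring
      _ ≤ (m - 1) * C₁ * Y ^ 2 := by gcongr; linarith
  have hZ : 0 < Y ^ ((m - 1) / β - 1) := rpow_pos_of_pos hY0 _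
  rw [hpow, hsplit]
  rw [hsplit] at hgrowth
  nlinarith

section Comparison

variable {φ d : ℝ → ℝ} {C₁ C₂ p : ℝ}

theorem le_of_strict_supersolution
    (hd : ∀ t, 0 ≤ t → HasDerivWithinAt φ (d t) (Ici 0) t)
    (hode : ∀ t, 0 ≤ t → d t + C₁ * φ t ^ p ≤ C₂)
    {B B' : ℝ → ℝ} {a b : ℝ} (ha : 0 ≤ a) (hB : ∀ x ∈ Icc a b, HasDerivAt B (B' x) x)
    (hBsuper : ∀ x ∈ Ico a b, C₂ < B' x + C₁ * B x ^ p) (hφB : φ a ≤ B a) :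
    ∀ x ∈ Icc a b, φ x ≤ B x := by
  have hnonneg {x} (hx : x ∈ Icc a b) : 0 ≤ x := ha.trans hx.1
  refine image_le_of_deriv_right_lt_deriv_boundary'
    (fun x hx => (hd x (hnonneg hx)).continuousWithinAt.mono fun y hy => ha.trans hy.1)
    (fun x hx => (hd x (hnonneg (Ico_subset_Icc_self hx))).mono
      (Ici_subset_Ici.2 (hnonneg (Ico_subset_Icc_self hx))))
    hφB (fun x hx => (hB x hx).continuousAt.continuousWithinAt)
    (fun x hx => (hB x (Ico_subset_Icc_self hx)).hasDerivWithinAt) fun x hx hφx => ?_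
  have hodex := hode x (hnonneg (Ico_subset_Icc_self hx))
  rw [hφx] at hodex
  linarith [hBsuper x hx]

theorem le_max_rpow_inv_of_ode (hC₁ : 0 < C₁) (hC₂ : 0 ≤ C₂) (hp : 0 < p)
    (hd : ∀ t, 0 ≤ t → HasDerivWithinAt φ (d t) (Ici 0) t)
    (hode : ∀ t, 0 ≤ t → d t + C₁ * φ t ^ p ≤ C₂) {t : ℝ} (ht : 0 ≤ t) :
    φ t ≤ max (φ 0) ((C₂ / C₁) ^ p⁻¹) := by
  set M := (C₂ / C₁) ^ p⁻¹
  refine le_of_forall_pos_le_add fun ε hε => ?_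
  refine le_of_strict_supersolution hd hode le_rfl (b := t)
    (B := fun _ => max (φ 0) M + ε) (B' := 0)
    (fun x _ => hasDerivAt_const x _) (fun x _ => ?_) (by linarith [le_max_left (φ 0) M])
    t ⟨ht, le_rfl⟩
  have hM : M < max (φ 0) M + ε := by linarith [le_max_right (φ 0) M]
  have hM0 : 0 ≤ M := rpow_nonneg (div_nonneg hC₂ hC₁.le) _
  have hC := (rpow_inv_lt_iff_of_pos (div_nonneg hC₂ hC₁.le) (hM0.trans hM.le) hp).1 hM
  rw [div_lt_iff₀' hC₁] at hC
  simpa using hC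

theorem le_rpow_const_add_div_of_ode {m β a b : ℝ} (hm : 1 < m) (hβ : 0 < β) (hC₁ : 0 < C₁)
    (ha : 0 ≤ a) (haC : m * C₂ ≤ C₁ * a ^ ((m + β - 1) / β)) (hb : m ≤ β * C₁ * b)
    (hd : ∀ t, 0 ≤ t → HasDerivWithinAt φ (d t) (Ici 0) t)
    (hode : ∀ t, 0 ≤ t → d t + C₁ * φ t ^ ((m + β - 1) / (m - 1)) ≤ C₂) {t : ℝ} (ht : 0 < t) :
    φ t ≤ (a + b / t) ^ ((m - 1) / β) := by
  have hb0 : 0 < b := pos_of_mul_pos_right (by linarith) (mul_pos hβ hC₁).le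
  obtain ⟨L, hL⟩ := (isCompact_Icc (a := 0) (b := t)).bddAbove_image
    (f := φ) fun x hx => (hd x hx.1).continuousWithinAt.mono fun y hy => hy.1
  obtain ⟨s, hLs, hs⟩ := (((tendsto_rpow_const_add_div_nhdsGT_zero (a := a) hb0
    (div_pos (by linarith : 0 < m - 1) hβ)).eventually_ge_atTop L).and (Ioc_mem_nhdsGT ht)).exists
  have hpos {x} (hx : x ∈ Icc s t) : 0 < x := hs.1.trans_le hx.1
  refine le_of_strict_supersolution hd hode hs.1.le
    (fun x hx => hasDerivAt_rpow_const_add_div (hpos hx).ne'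
      (add_pos_of_nonneg_of_pos ha (div_pos hb0 (hpos hx))))
    (fun x hx => ?_) ((hL ⟨s, ⟨hs.1.le, hs.2⟩, rfl⟩).trans hLs) t ⟨hs.2, le_rfl⟩
  exact rpow_const_add_div_strict_supersolution hm hβ hC₁ ha haC hb (hpos (Ico_subset_Icc_self hx))

end Comparison

theorem stmt19_general (m β C₁ C₂ : ℝ) (hm : 1 < m) (hβ0 : 0 < β)
    (hC₁ : 0 < C₁) (hC₂ : 0 < C₂)
    (φ d : ℝ → ℝ)
    (hd : ∀ t : ℝ, 0 ≤ t → HasDerivWithinAt φ (d t) (Set.Ici 0) t)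
    (hode : ∀ t : ℝ, 0 ≤ t → d t + C₁ * φ t ^ ((m + β - 1) / (m - 1)) ≤ C₂) :
    (∀ t : ℝ, 0 < t →
      C₂ ≤ deriv (fun s : ℝ =>
          ((m * C₂ / C₁) ^ (β / (m + β - 1)) + m / (β * C₁) / s) ^ ((m - 1) / β)) t +
        C₁ * (((m * C₂ / C₁) ^ (β / (m + β - 1)) + m / (β * C₁) / t) ^ ((m - 1) / β))
          ^ ((m + β - 1) / (m - 1))) ∧
    (∀ t : ℝ, 0 < t →
      φ t ≤ ((m * C₂ / C₁) ^ (β / (m + β - 1)) + m / (β * C₁) / t) ^ ((m - 1) / β)) ∧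
    (∀ t : ℝ, 0 ≤ t →
      φ t ≤ max (φ 0) ((C₂ / C₁) ^ ((m - 1) / (m + β - 1)))) := by
  have hm1 : 0 < m - 1 := by linarith
  have hmβ : 0 < m + β - 1 := by linarith
  have hX₁ : 0 ≤ (m * C₂ / C₁) ^ (β / (m + β - 1)) := rpow_nonneg (by positivity) _
  have hX₁C : m * C₂ ≤ C₁ * ((m * C₂ / C₁) ^ (β / (m + β - 1))) ^ ((m + β - 1) / β) := by
    rw [← rpow_mul (by positivity), show β / (m + β - 1) * ((m + β - 1) / β) = 1 by field_simp,
      rpow_one, mul_div_cancel₀ _ hC₁.ne']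
  have hX₂ : m ≤ β * C₁ * (m / (β * C₁)) := (mul_div_cancel₀ m (by positivity)).ge
  refine ⟨fun t ht => ?_,
    fun t ht => le_rpow_const_add_div_of_ode hm hβ0 hC₁ hX₁ hX₁C hX₂ hd hode ht, fun t ht => ?_⟩
  · rw [(hasDerivAt_rpow_const_add_div ht.ne' (by positivity)).deriv]
    exact (rpow_const_add_div_strict_supersolution hm hβ0 hC₁ hX₁ hX₁C hX₂ ht).le
  · simpa only [inv_div] using le_max_rpow_inv_of_ode hC₁ hC₂.le (div_pos hmβ hm1) hd hode ht

/-- The comparison argument for the differential inequality (3.14):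
supersolution property of `X`, the bound `φ(t) ≤ X(t)` and the invariance bound. -/
theorem stmt19 (m β C₁ C₂ : ℝ) (hm : 1 < m) (hβ0 : 0 < β) (hβ1 : β ≤ 1)
    (hC₁ : 0 < C₁) (hC₂ : 0 < C₂)
    (φ d : ℝ → ℝ) (hφnn : ∀ t : ℝ, 0 ≤ t → 0 ≤ φ t)
    (hd : ∀ t : ℝ, 0 ≤ t → HasDerivWithinAt φ (d t) (Set.Ici 0) t)
    (hdc : ContinuousOn d (Set.Ici 0))
    (hode : ∀ t : ℝ, 0 ≤ t → d t + C₁ * φ t ^ ((m + β - 1) / (m - 1)) ≤ C₂) :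
    (∀ t : ℝ, 0 < t →
      C₂ ≤ deriv (fun s : ℝ =>
          ((m * C₂ / C₁) ^ (β / (m + β - 1)) + m / (β * C₁) / s) ^ ((m - 1) / β)) t +
        C₁ * (((m * C₂ / C₁) ^ (β / (m + β - 1)) + m / (β * C₁) / t) ^ ((m - 1) / β))
          ^ ((m + β - 1) / (m - 1))) ∧
    (∀ t : ℝ, 0 < t →
      φ t ≤ ((m * C₂ / C₁) ^ (β / (m + β - 1)) + m / (β * C₁) / t) ^ ((m - 1) / β)) ∧
    (∀ t : ℝ, 0 ≤ t →
      φ t ≤ max (φ 0) ((C₂ / C₁) ^ ((m - 1) / (m + β - 1)))) :=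
  stmt19_general m β C₁ C₂ hm hβ0 hC₁ hC₂ φ d hd hode
end
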